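/- Let f : ℝ → ℝ be three times continuously differentiable on an open interval D, let x* ∈ D be a simple zero of f, and set c₂ = f''(x*)/(2f'(x*)). For x near x*, let e = x - x*, y = x - f(x)/f'(x), and z = x - f(x)²/((f(x)-f(y))·f'(x)). Then (z - x*)/e³ → c₂² as e → 0. -/

import Mathlib

/-!
Let `a = f'(x*)`, `c₂ = f''(x*)/(2a)` and let `y` be the Newton point of `x = x* + e`. The point
`z` is the secant step through `x` and `y`, so
`z - x* = ((y - x*) f(x) - e f(y)) / (f(x) - f(y))`.
Newton's error is `y - x* ~ c₂ e²`, and the second-order expansion of `f` at its root gives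
`f(y) = a (y - x*) + O(e⁴)`. Hence the numerator is `(y - x*) (f(x) - a e) + O(e⁵) ~ a c₂² e⁴`,
while the denominator is `~ a e`.
-/

open Filter Topology Asymptotics

noncomputable def newtonStep (f : ℝ → ℝ) (x : ℝ) : ℝ :=
  x - f x / deriv f x

noncomputable def newtonSecantStep (f : ℝ → ℝ) (x : ℝ) : ℝ :=
  x - f x ^ 2 / ((f x - f (newtonStep f x)) * deriv f x)

lemma newtonSecantStep_sub {f : ℝ → ℝ} {x : ℝ} (x₀ : ℝ) (hd : deriv f x ≠ 0)
    (hsec : f x - f (newtonStep f x) ≠ 0) :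
    newtonSecantStep f x - x₀ =
      ((newtonStep f x - x₀) * f x - (x - x₀) * f (newtonStep f x)) /
        (f x - f (newtonStep f x)) := by
  rw [newtonSecantStep]
  generalize f (newtonStep f x) = fy at *
  rw [newtonStep]
  field_simp
  ring

lemma tendsto_pow_nhdsNE_zero {M : Type*} [MonoidWithZero M] [TopologicalSpace M]
    [ContinuousMul M] (n : ℕ) (hn : n ≠ 0) :
    Tendsto (fun e : M => e ^ n) (𝓝[≠] 0) (𝓝 0) :=
  ((continuous_pow n).tendsto' 0 0 (zero_pow hn)).mono_left nhdsWithin_le_nhds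

section Expansion

variable {f : ℝ → ℝ} {x₀ b : ℝ}

lemma tendsto_deriv_const_add (h2 : HasDerivAt (deriv f) b x₀) :
    Tendsto (fun e => deriv f (x₀ + e)) (𝓝[≠] 0) (𝓝 (deriv f x₀)) :=
  (h2.continuousAt.tendsto.comp ((continuous_const_add x₀).tendsto' 0 x₀ (add_zero x₀))).mono_left
    nhdsWithin_le_nhds

lemma tendsto_sub_deriv_mul_div_sq (hdiff : ∀ᶠ x in 𝓝 x₀, DifferentiableAt ℝ f x)
    (h2 : HasDerivAt (deriv f) b x₀) :
    Tendsto (fun e => (f (x₀ + e) - f x₀ - deriv f x₀ * e) / e ^ 2) (𝓝[≠] 0) (𝓝 (b / 2)) := by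
  have hshift : Tendsto (fun e : ℝ => x₀ + e) (𝓝 0) (𝓝 x₀) :=
    (continuous_const_add x₀).tendsto' 0 x₀ (add_zero x₀)
  refine HasDerivAt.lhopital_zero_nhdsNE (f' := fun e => deriv f (x₀ + e) - deriv f x₀)
    (g' := fun e => 2 * e) ?_ ?_ ?_ ?_ (tendsto_pow_nhdsNE_zero 2 two_ne_zero) ?_
  · filter_upwards [(hshift.eventually hdiff).filter_mono nhdsWithin_le_nhds] with e he
    simpa using ((he.hasDerivAt.comp_const_add x₀ e).sub_const (f x₀)).fun_sub
      ((hasDerivAt_id e).const_mul (deriv f x₀))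
  · exact Eventually.of_forall fun e => by simpa using hasDerivAt_pow 2 e
  · filter_upwards [self_mem_nhdsWithin] with e he
    simpa using he
  · have hf : ContinuousAt f x₀ := hdiff.self_of_nhds.continuousAt
    simpa using (((hf.tendsto.comp hshift).sub_const (f x₀)).sub
      (tendsto_id.const_mul (deriv f x₀))).mono_left nhdsWithin_le_nhds
  · refine (h2.tendsto_slope_zero.div_const 2).congr fun e => ?_
    simp only [smul_eq_mul]
    ring

variable (hdiff : ∀ᶠ x in 𝓝 x₀, DifferentiableAt ℝ f x) (h2 : HasDerivAt (deriv f) b x₀)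
  (hroot : f x₀ = 0)
include hdiff h2 hroot

lemma isBigO_sub_deriv_mul :
    (fun t => f (x₀ + t) - deriv f x₀ * t) =O[𝓝 0] fun t => t ^ 2 := by
  have hratio := (tendsto_sub_deriv_mul_div_sq hdiff h2).isBigO_one ℝ
  rw [isBigO_one_nhds_ne_iff] at hratio
  refine (hratio.mul (isBigO_refl (fun t : ℝ => t ^ 2) _)).congr (fun t => ?_) (fun t => one_mul _)
  rcases eq_or_ne t 0 with rfl | ht
  · simp [hroot]
  · rw [hroot, sub_zero, div_mul_cancel₀ _ (pow_ne_zero 2 ht)]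

variable (hder : deriv f x₀ ≠ 0)
include hder

lemma tendsto_newtonStep_sub_div_sq :
    Tendsto (fun e => (newtonStep f (x₀ + e) - x₀) / e ^ 2) (𝓝[≠] 0)
      (𝓝 (b / (2 * deriv f x₀))) := by
  have hslope : Tendsto (fun e => (deriv f (x₀ + e) - deriv f x₀) / e) (𝓝[≠] 0) (𝓝 b) :=
    h2.tendsto_slope_zero.congr fun e => by rw [smul_eq_mul, inv_mul_eq_div]
  have h := (hslope.sub (tendsto_sub_deriv_mul_div_sq hdiff h2)).div
    (tendsto_deriv_const_add h2) hder
  rw [show (b - b / 2) / deriv f x₀ = b / (2 * deriv f x₀) by field_simp; ring] at h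
  refine h.congr' ?_
  filter_upwards [self_mem_nhdsWithin, (tendsto_deriv_const_add h2).eventually_ne hder]
    with e (he : e ≠ 0) hde
  rw [Pi.div_apply, newtonStep, hroot]
  field_simp
  ring

lemma tendsto_remainder_newtonStep_div_cube :
    Tendsto (fun e => (f (newtonStep f (x₀ + e)) - deriv f x₀ * (newtonStep f (x₀ + e) - x₀)) /
      e ^ 3) (𝓝[≠] 0) (𝓝 0) := by
  set N := fun e => newtonStep f (x₀ + e) - x₀
  have hN : N =O[𝓝[≠] 0] fun e => e ^ 2 := by
    refine isBigO_of_div_tendsto_nhds ?_ _ (tendsto_newtonStep_sub_div_sq hdiff h2 hroot hder)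
    filter_upwards [self_mem_nhdsWithin] with e (he : e ≠ 0) h
    exact absurd h (pow_ne_zero 2 he)
  have hN0 : Tendsto N (𝓝[≠] 0) (𝓝 0) :=
    hN.trans_tendsto (tendsto_pow_nhdsNE_zero 2 two_ne_zero)
  have hr : (fun e => f (x₀ + N e) - deriv f x₀ * N e) =O[𝓝[≠] 0] fun e => e ^ 4 := by
    simpa [← pow_mul, Function.comp_def] using
      ((isBigO_sub_deriv_mul hdiff h2 hroot).comp_tendsto hN0).trans (hN.pow 2)
  have h43 : (fun e : ℝ => e ^ 4) =o[𝓝[≠] 0] fun e => e ^ 3 :=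
    (isLittleO_pow_pow (by norm_num)).mono nhdsWithin_le_nhds
  simpa [N] using (hr.trans_isLittleO h43).tendsto_div_nhds_zero

lemma tendsto_apply_newtonStep_div :
    Tendsto (fun e => f (newtonStep f (x₀ + e)) / e) (𝓝[≠] 0) (𝓝 0) := by
  have h := (((tendsto_newtonStep_sub_div_sq hdiff h2 hroot hder).const_mul (deriv f x₀)).mul
    (tendsto_id.mono_left nhdsWithin_le_nhds)).add
    ((tendsto_remainder_newtonStep_div_cube hdiff h2 hroot hder).mul
      (tendsto_pow_nhdsNE_zero 2 two_ne_zero))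
  simp only [id, mul_zero, add_zero] at h
  refine h.congr' ?_
  filter_upwards [self_mem_nhdsWithin] with e (he : e ≠ 0)
  field_simp
  ring

lemma tendsto_secant_numerator_div_pow_four :
    Tendsto (fun e => ((newtonStep f (x₀ + e) - x₀) * f (x₀ + e) -
        e * f (newtonStep f (x₀ + e))) / e ^ 4) (𝓝[≠] 0)
      (𝓝 (b / (2 * deriv f x₀) * (b / 2))) := by
  have h := ((tendsto_newtonStep_sub_div_sq hdiff h2 hroot hder).mul
    (tendsto_sub_deriv_mul_div_sq hdiff h2)).sub
    (tendsto_remainder_newtonStep_div_cube hdiff h2 hroot hder)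
  rw [sub_zero] at h
  refine h.congr' ?_
  filter_upwards [self_mem_nhdsWithin] with e (he : e ≠ 0)
  rw [hroot]
  field_simp
  ring

theorem tendsto_newtonSecantStep_sub_div_cube :
    Tendsto (fun e => (newtonSecantStep f (x₀ + e) - x₀) / e ^ 3) (𝓝[≠] 0)
      (𝓝 ((b / (2 * deriv f x₀)) ^ 2)) := by
  have hu : Tendsto (fun e => f (x₀ + e) / e) (𝓝[≠] 0) (𝓝 (deriv f x₀)) :=
    hdiff.self_of_nhds.hasDerivAt.tendsto_slope_zero.congr fun e => by
      rw [hroot, sub_zero, smul_eq_mul, inv_mul_eq_div]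
  have hsec : Tendsto (fun e => (f (x₀ + e) - f (newtonStep f (x₀ + e))) / e) (𝓝[≠] 0)
      (𝓝 (deriv f x₀)) := by
    simpa [sub_div] using hu.sub (tendsto_apply_newtonStep_div hdiff h2 hroot hder)
  have h := (tendsto_secant_numerator_div_pow_four hdiff h2 hroot hder).div hsec hder
  rw [show b / (2 * deriv f x₀) * (b / 2) / deriv f x₀ = (b / (2 * deriv f x₀)) ^ 2 by
    field_simp] at h
  refine h.congr' ?_
  filter_upwards [self_mem_nhdsWithin, (tendsto_deriv_const_add h2).eventually_ne hder,
    hsec.eventually_ne hder] with e (he : e ≠ 0) hde hsec_ne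
  rw [Pi.div_apply, newtonSecantStep_sub x₀ hde (div_ne_zero_iff.mp hsec_ne).1,
    add_sub_cancel_left]
  field_simp

end Expansion

theorem stmt17_general (D : Set ℝ) (hD : IsOpen D)
    (f : ℝ → ℝ) (hf : ContDiffOn ℝ 3 f D)
    (x₀ : ℝ) (hx₀ : x₀ ∈ D) (hroot : f x₀ = 0) (hder : deriv f x₀ ≠ 0) :
    Filter.Tendsto
      (fun e : ℝ =>
        (let x := x₀ + e
         let y := x - f x / deriv f x
         let z := x - (f x)^2 / ((f x - f y) * deriv f x)
         (z - x₀) / e^3))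
      (nhdsWithin 0 {0}ᶜ)
      (nhds ((iteratedDeriv 2 f x₀ / (2 * deriv f x₀))^2)) := by
  have hdiff : ∀ᶠ x in 𝓝 x₀, DifferentiableAt ℝ f x := by
    filter_upwards [hD.mem_nhds hx₀] with x hx
    exact (hf.contDiffAt (hD.mem_nhds hx)).differentiableAt (by norm_num)
  have h2 : HasDerivAt (deriv f) (iteratedDeriv 2 f x₀) x₀ := by
    rw [iteratedDeriv_succ, iteratedDeriv_one]
    have hf' : ContDiffOn ℝ 2 (deriv f) D := hf.deriv_of_isOpen hD (by norm_num)
    exact ((hf'.contDiffAt (hD.mem_nhds hx₀)).differentiableAt (by norm_num)).hasDerivAt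
  exact tendsto_newtonSecantStep_sub_div_cube hdiff h2 hroot hder

theorem stmt17 (D : Set ℝ) (hD : IsOpen D) (hDconn : D.OrdConnected)
    (f : ℝ → ℝ) (hf : ContDiffOn ℝ 3 f D)
    (x₀ : ℝ) (hx₀ : x₀ ∈ D) (hroot : f x₀ = 0) (hder : deriv f x₀ ≠ 0) :
    Filter.Tendsto
      (fun e : ℝ =>
        (let x := x₀ + e
         let y := x - f x / deriv f x
         let z := x - (f x)^2 / ((f x - f y) * deriv f x)
         (z - x₀) / e^3))
      (nhdsWithin 0 {0}ᶜ)
      (nhds ((iteratedDeriv 2 f x₀ / (2 * deriv f x₀))^2)) :=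
  stmt17_general D hD f hf x₀ hx₀ hroot hder
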